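/- arXiv:1701.08390 — 5 statements merged into one kernel-verified Lean document; each statement's English description precedes it below -/
import Mathlib

section
/- Let A be a real m×m matrix with nonpositive off-diagonal entries, zero row sums, and irreducible. Then the image of A contains no vector with all components strictly positive, and no vector with all components strictly negative. In particular, Im(A) ∩ ker(A) = {0}. -/
/-!
Since the rows of `A` sum to zero, `(A v)ᵢ = ∑ⱼ Aᵢⱼ (vⱼ - vᵢ)`, and all off-diagonal `Aᵢⱼ` are
nonpositive. Hence `(A v)ᵢ ≤ 0` at a minimum of `v` and `(A v)ᵢ ≥ 0` at a maximum, so `A v` is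
neither strictly positive nor strictly negative. If `A x = 0`, irreducibility gives an edge
leaving the set where `x` attains its maximum, which would make `(A x)ᵢ > 0` there; so `x` is
constant. A constant vector `c` in the image must then have `c = 0`.
-/

open Matrix

namespace Matrix

theorem mulVec_apply_eq_sum_mul_sub {ι R : Type*} [Fintype ι] [CommRing R] {A : Matrix ι ι R}
    (hrow : ∀ i, ∑ j, A i j = 0) (v : ι → R) (i : ι) :
    (A *ᵥ v) i = ∑ j, A i j * (v j - v i) := by
  simp only [mul_sub, Finset.sum_sub_distrib, ← Finset.sum_mul, hrow, zero_mul, sub_zero]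
  rfl

variable {ι R : Type*} [Fintype ι] [CommRing R] [LinearOrder R] [IsStrictOrderedRing R]
  {A : Matrix ι ι R}

theorem mulVec_apply_nonpos_of_forall_le (hoff : ∀ i j, i ≠ j → A i j ≤ 0)
    (hrow : ∀ i, ∑ j, A i j = 0) {v : ι → R} {i : ι} (hmin : ∀ j, v i ≤ v j) :
    (A *ᵥ v) i ≤ 0 := by
  rw [mulVec_apply_eq_sum_mul_sub hrow]
  refine Finset.sum_nonpos fun j _ => ?_
  rcases eq_or_ne i j with rfl | hij
  · simp
  · exact mul_nonpos_of_nonpos_of_nonneg (hoff i j hij) (sub_nonneg.mpr (hmin j))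

theorem mulVec_apply_pos_of_forall_le (hoff : ∀ i j, i ≠ j → A i j ≤ 0)
    (hrow : ∀ i, ∑ j, A i j = 0) {v : ι → R} {i j : ι} (hmax : ∀ k, v k ≤ v i)
    (hj : v j < v i) (hij : A i j < 0) : 0 < (A *ᵥ v) i := by
  rw [mulVec_apply_eq_sum_mul_sub hrow]
  refine Finset.sum_pos' (fun k _ => ?_) ⟨j, Finset.mem_univ j, ?_⟩
  · rcases eq_or_ne i k with rfl | hik
    · simp
    · exact mul_nonneg_of_nonpos_of_nonpos (hoff i k hik) (sub_nonpos.mpr (hmax k))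
  · exact mul_pos_of_neg_of_neg hij (sub_neg.mpr hj)

theorem not_forall_mulVec_pos [Nonempty ι] (hoff : ∀ i j, i ≠ j → A i j ≤ 0)
    (hrow : ∀ i, ∑ j, A i j = 0) (v : ι → R) : ¬ ∀ i, 0 < (A *ᵥ v) i := by
  obtain ⟨i, hi⟩ := Finite.exists_min v
  exact fun hpos => (hpos i).not_ge (mulVec_apply_nonpos_of_forall_le hoff hrow hi)

theorem not_forall_mulVec_neg [Nonempty ι] (hoff : ∀ i j, i ≠ j → A i j ≤ 0)
    (hrow : ∀ i, ∑ j, A i j = 0) (v : ι → R) : ¬ ∀ i, (A *ᵥ v) i < 0 := by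
  simpa [mulVec_neg] using not_forall_mulVec_pos hoff hrow (-v)

theorem eq_of_mulVec_eq_zero (hoff : ∀ i j, i ≠ j → A i j ≤ 0)
    (hrow : ∀ i, ∑ j, A i j = 0)
    (hirr : ∀ W : Finset ι, W.Nonempty → W ≠ Finset.univ → ∃ i ∈ W, ∃ j ∉ W, A i j < 0)
    {x : ι → R} (hx : A *ᵥ x = 0) (i j : ι) : x i = x j := by
  have : Nonempty ι := ⟨i⟩
  obtain ⟨i₀, hmax⟩ := Finite.exists_max x
  suffices h : ∀ k, x k = x i₀ by rw [h i, h j]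
  classical
  by_contra! ⟨l, hl⟩
  set W := Finset.univ.filter fun k => x k = x i₀
  obtain ⟨k, hk, k', hk', hkk'⟩ := hirr W ⟨i₀, by simp [W]⟩
    fun hW => hl (Finset.filter_eq_self.mp hW l (Finset.mem_univ l))
  simp only [W, Finset.mem_filter, Finset.mem_univ, true_and] at hk hk'
  have hpos := mulVec_apply_pos_of_forall_le hoff hrow (hk ▸ hmax)
    (hk ▸ (hmax k').lt_of_ne hk') hkk'
  simp [hx] at hpos

end Matrix

/-- For an m×m real matrix with nonpositive off-diagonal entries,
zero row sums, and irreducible, the image contains no strictly positive vector and no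
strictly negative vector, and Im(A) ∩ ker(A) = {0}. -/
theorem image_no_positive_vector {m : ℕ} (hm : 2 ≤ m)
    (A : Matrix (Fin m) (Fin m) ℝ)
    (hoff : ∀ i j, i ≠ j → A i j ≤ 0)
    (hrow : ∀ i, ∑ j, A i j = 0)
    (hirr : ∀ W : Finset (Fin m), W.Nonempty → W ≠ Finset.univ →
      ∃ i ∈ W, ∃ j ∉ W, A i j < 0) :
    (¬ ∃ v : Fin m → ℝ, ∀ i, 0 < A.mulVec v i) ∧
    (¬ ∃ v : Fin m → ℝ, ∀ i, A.mulVec v i < 0) ∧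
    LinearMap.range A.mulVecLin ⊓ LinearMap.ker A.mulVecLin = ⊥ := by
  let i₀ : Fin m := ⟨0, by omega⟩
  have : Nonempty (Fin m) := ⟨i₀⟩
  have hpos (v : Fin m → ℝ) := not_forall_mulVec_pos hoff hrow v
  have hneg (v : Fin m → ℝ) := not_forall_mulVec_neg hoff hrow v
  refine ⟨fun ⟨v, hv⟩ => hpos v hv, fun ⟨v, hv⟩ => hneg v hv, ?_⟩
  rw [Submodule.eq_bot_iff]
  rintro _ ⟨⟨v, rfl⟩, hker⟩
  simp only [SetLike.mem_coe, LinearMap.mem_ker, mulVecLin_apply] at hker ⊢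
  have hconst (i : Fin m) := eq_of_mulVec_eq_zero hoff hrow hirr hker i i₀
  have hc : (A *ᵥ v) i₀ = 0 := by
    rcases lt_trichotomy ((A *ᵥ v) i₀) 0 with h | h | h
    · exact absurd (fun i => hconst i ▸ h) (hneg v)
    · exact h
    · exact absurd (fun i => hconst i ▸ h) (hpos v)
  ext i
  simp [hconst i, hc]
end

section
/- Let Im(A) ⊂ ℝ^m be a linear subspace of dimension m−1 such that Im(A) ∩ ℝ^m_+ = {0}, where ℝ^m_+ is the set of vectors with all components nonnegative. Then every nonzero vector orthogonal to Im(A) has either all components strictly positive or all components strictly negative. -/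
/-!
The hyperplane `V` has the right dimension to be the whole kernel of `v ↦ w ⬝ᵥ v`, so every
vector orthogonal to `w` lies in `V`. If some `w i` vanished, the basis vector `e i` would be a
nonzero nonnegative vector of `V`; if `w i > 0 > w j`, so would be `w i • e j - w j • e i`.
-/

open Module Matrix

theorem Submodule.eq_ker_of_le_of_finrank_eq_sub_one {K E : Type*} [DivisionRing K]
    [AddCommGroup E] [Module K E] [FiniteDimensional K E] {p : Submodule K E}
    {f : Dual K E} (hf : f ≠ 0) (hp : p ≤ LinearMap.ker f)
    (hdim : finrank K p = finrank K E - 1) : p = LinearMap.ker f :=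
  Submodule.eq_of_le_of_finrank_le hp <| by
    have := f.finrank_ker_add_one_of_ne_zero hf
    omega

section OrthogonalOrthant

variable {R ι : Type*} [CommRing R] [LinearOrder R] [IsStrictOrderedRing R]
  [Fintype ι] [DecidableEq ι]

theorem apply_ne_zero_of_orthogonal_nonneg_eq_zero {w : ι → R}
    (hw : ∀ v : ι → R, w ⬝ᵥ v = 0 → 0 ≤ v → v = 0) (i : ι) : w i ≠ 0 := by
  intro hi
  have hsingle : Pi.single i (1 : R) = 0 :=
    hw _ (by simp [dotProduct_single, hi]) (Pi.single_nonneg.mpr zero_le_one)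
  simpa using congrFun hsingle i

theorem not_pos_neg_of_orthogonal_nonneg_eq_zero {w : ι → R}
    (hw : ∀ v : ι → R, w ⬝ᵥ v = 0 → 0 ≤ v → v = 0) {i j : ι} (hi : 0 < w i) (hj : w j < 0) :
    False := by
  have hij : i ≠ j := by rintro rfl; exact hi.not_gt hj
  set v : ι → R := w i • Pi.single j 1 - w j • Pi.single i 1
  have hvi : v i = -w j := by simp [v, hij]
  have hv : v = 0 := by
    refine hw v (by simp [v, dotProduct_sub, dotProduct_smul, dotProduct_single, mul_comm]) ?_
    intro k
    by_cases hki : k = i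
    · subst hki; simp only [hvi, Pi.zero_apply]; linarith
    · by_cases hkj : k = j
      · subst hkj; simp [v, hki, hi.le]
      · simp [v, hki, hkj]
  have : -w j = 0 := hvi ▸ congrFun hv i
  linarith

theorem pos_or_neg_of_orthogonal_nonneg_eq_zero {w : ι → R}
    (hw : ∀ v : ι → R, w ⬝ᵥ v = 0 → 0 ≤ v → v = 0) :
    (∀ i, 0 < w i) ∨ (∀ i, w i < 0) := by
  cases isEmpty_or_nonempty ι with
  | inl _ => exact Or.inl isEmptyElim
  | inr hι =>
    obtain ⟨i₀⟩ := hι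
    have hne := apply_ne_zero_of_orthogonal_nonneg_eq_zero hw
    rcases (hne i₀).lt_or_gt with h₀ | h₀
    · refine Or.inr fun i => (hne i).lt_or_gt.resolve_right fun h => ?_
      exact not_pos_neg_of_orthogonal_nonneg_eq_zero hw h h₀
    · refine Or.inl fun i => (hne i).lt_or_gt.resolve_left fun h => ?_
      exact not_pos_neg_of_orthogonal_nonneg_eq_zero hw h₀ h

end OrthogonalOrthant

/-- If V ⊆ ℝ^m is a subspace of dimension m−1 meeting the nonnegative
orthant only at 0, then every nonzero vector orthogonal to V has either all components
strictly positive or all components strictly negative. -/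
theorem orthogonal_vector_signed {m : ℕ}
    (V : Submodule ℝ (Fin m → ℝ))
    (hdim : Module.finrank ℝ V = m - 1)
    (hpos : ∀ v ∈ V, (∀ i, 0 ≤ v i) → v = 0)
    (w : Fin m → ℝ) (hw : w ≠ 0)
    (horth : ∀ v ∈ V, ∑ i, w i * v i = 0) :
    (∀ i, 0 < w i) ∨ (∀ i, w i < 0) := by
  set f := dotProductEquiv ℝ (Fin m) w
  have hf : f ≠ 0 := by simpa [f] using hw
  have hV : V = LinearMap.ker f :=
    Submodule.eq_ker_of_le_of_finrank_eq_sub_one hf (fun v hv => horth v hv)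
      (by rw [hdim, finrank_fin_fun])
  exact pos_or_neg_of_orthogonal_nonneg_eq_zero fun v hv hnonneg => hpos v (hV ▸ hv) hnonneg
end

section
/- Let f : ℝ^N → ℝ be locally Lipschitz and η : (−∞,0] → ℝ^N absolutely continuous. Let s be a point where both t ↦ f(η(t)) and t ↦ η(t) are differentiable. Then there exists p in the Clarke generalized gradient ∂f(η(s)) such that (d/dt) f(η(t))|_{t=s} = p · η̇(s). -/
/-!
Since `f` is Lipschitz near `x = η s`, replacing `η (s + h)` by `x + h • v`, where `v = η' s`,
changes `f` by `o(h)`; so `d = (f ∘ η)' s` is also the derivative of `f` at `x` along `v`.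
By Rademacher's theorem and Fubini, almost every line parallel to `v` meets the
non-differentiability set of `f` in a null set, and integrating `Df · v` along such lines close to
`x` shows that there are differentiability points `y → x` with `liminf Df(y) v ≥ d`. A limit of
these gradients is some `p ∈ ∂f(x)` with `p v ≥ d`; the same argument for `-f` gives
`q ∈ ∂f(x)` with `q v ≤ d`, and some point of the segment `[q, p]` takes the value `d` at `v`.
-/

open Set MeasureTheory Filter Topology

noncomputable section

/-- Euclidean space ℝ^N. -/
abbrev E (N : ℕ) := EuclideanSpace ℝ (Fin N)
/-- The dual of ℝ^N, representing momentum variables p (acting by p · q). -/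
abbrev Dual (N : ℕ) := E N →L[ℝ] ℝ

variable {N : ℕ}

/-- ℤ^N-periodicity: a function on ℝ^N descends to the flat torus 𝕋^N. -/
def ZPer {α : Type*} (f : E N → α) : Prop :=
  ∀ (x : E N) (k : Fin N → ℤ), f (x + (EuclideanSpace.equiv (Fin N) ℝ).symm fun i => (k i : ℝ)) = f x

/-- The Clarke generalized gradient of f at x. -/
def clarke (f : E N → ℝ) (x : E N) : Set (Dual N) :=
  convexHull ℝ {p | ∃ u : ℕ → E N, (∀ n, DifferentiableAt ℝ f (u n)) ∧
    Tendsto u atTop (𝓝 x) ∧ Tendsto (fun n => fderiv ℝ f (u n)) atTop (𝓝 p)}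

/-- The viscosity superdifferential D⁺f(x): differentials of C¹ functions supertangent to f at x. -/
def Dplus (f : E N → ℝ) (x : E N) : Set (Dual N) :=
  {p | ∃ φ : E N → ℝ, ContDiff ℝ 1 φ ∧ φ x = f x ∧ (∀ᶠ y in 𝓝 x, f y ≤ φ y) ∧ fderiv ℝ φ x = p}

/-- The viscosity subdifferential D⁻f(x): differentials of C¹ functions subtangent to f at x. -/
def Dminus (f : E N → ℝ) (x : E N) : Set (Dual N) :=
  {p | ∃ φ : E N → ℝ, ContDiff ℝ 1 φ ∧ φ x = f x ∧ (∀ᶠ y in 𝓝 x, φ y ≤ f y) ∧ fderiv ℝ φ x = p}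

open Metric

section

variable {F G : Type*} [NormedAddCommGroup F] [NormedSpace ℝ F] [NormedAddCommGroup G]
  [NormedSpace ℝ G]

theorem LipschitzOnWith.sub_le_mul_of_ae_deriv_le {g : ℝ → ℝ} {K : NNReal} {a b M : ℝ}
    (hab : a ≤ b) (hg : LipschitzOnWith K g (Icc a b))
    (hM : ∀ᵐ t, t ∈ Ioo a b → deriv g t ≤ M) :
    g b - g a ≤ M * (b - a) := by
  have hac := (uIcc_of_le hab ▸ hg).absolutelyContinuousOnInterval
  have hM' : deriv g ≤ᵐ[volume.restrict (Icc a b)] fun _ => M := by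
    rw [EventuallyLE, ← Measure.restrict_congr_set Ioo_ae_eq_Icc]
    exact (ae_restrict_iff' measurableSet_Ioo).2 hM
  calc g b - g a = ∫ t in a..b, deriv g t := hac.integral_deriv_eq_sub.symm
    _ ≤ ∫ _ in a..b, M := intervalIntegral.integral_mono_ae_restrict hab
        hac.intervalIntegrable_deriv intervalIntegrable_const hM'
    _ = M * (b - a) := by rw [intervalIntegral.integral_const, smul_eq_mul, mul_comm]

theorem Convex.add_smul_mem_of_mem_Icc {U : Set F} (hU : Convex ℝ U) {w v : F} {h t : ℝ}
    (hw : w ∈ U) (hwh : w + h • v ∈ U) (ht : t ∈ Icc 0 h) : w + t • v ∈ U := by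
  rcases (ht.1.trans ht.2).eq_or_lt with rfl | hpos
  · obtain rfl : t = 0 := le_antisymm ht.2 ht.1
    exact hwh
  · have := hU.add_smul_mem hw hwh ⟨div_nonneg ht.1 hpos.le, div_le_one_of_le₀ ht.2 hpos.le⟩
    rwa [smul_smul, div_mul_cancel₀ _ hpos.ne'] at this

theorem LipschitzOnWith.apply_add_smul_sub_le_of_ae_differentiableAt {f : F → ℝ} {K : NNReal}
    {U : Set F} (hf : LipschitzOnWith K f U) {v : F} {M : ℝ}
    (hM : ∀ y ∈ U, DifferentiableAt ℝ f y → fderiv ℝ f y v ≤ M) {w : F} {h : ℝ} (hh : 0 ≤ h)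
    (hseg : ∀ t ∈ Icc 0 h, w + t • v ∈ U)
    (hdiff : ∀ᵐ t, t ∈ Ioo 0 h → DifferentiableAt ℝ f (w + t • v)) :
    f (w + h • v) - f w ≤ M * h := by
  have hline : LipschitzWith ‖v‖₊ fun t : ℝ => w + t • v :=
    LipschitzWith.of_dist_le_mul fun t t' => by
      simp [dist_eq_norm, ← sub_smul, norm_smul, mul_comm]
  have hg : LipschitzOnWith (K * ‖v‖₊) (fun t => f (w + t • v)) (Icc 0 h) :=
    hf.comp hline.lipschitzOnWith hseg
  have hderiv : ∀ᵐ t, t ∈ Ioo 0 h → deriv (fun t => f (w + t • v)) t ≤ M := by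
    filter_upwards [hdiff] with t ht hmem
    have hy := hseg t (Ioo_subset_Icc_self hmem)
    have hcomp : HasDerivAt (fun t => f (w + t • v)) (fderiv ℝ f (w + t • v) v) t := by
      simpa [Function.comp_def] using (ht hmem).hasFDerivAt.comp_hasDerivAt t
        (((hasDerivAt_id t).smul_const v).const_add w)
    rw [hcomp.deriv]
    exact hM _ hy (ht hmem)
  simpa using hg.sub_le_mul_of_ae_deriv_le hh hderiv

theorem LipschitzOnWith.hasLineDerivAt_of_hasDerivAt_comp {f : F → G} {K : NNReal} {U : Set F}
    (hf : LipschitzOnWith K f U) {γ : ℝ → F} {s : ℝ} (hU : U ∈ 𝓝 (γ s)) {v : F} {d : G}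
    (hγ : HasDerivAt γ v s) (hfγ : HasDerivAt (fun t => f (γ t)) d s) :
    HasLineDerivAt ℝ f d (γ s) v := by
  have hcurve : ∀ᶠ h in 𝓝 (0 : ℝ), γ (s + h) ∈ U :=
    hγ.continuousAt.tendsto.comp (Continuous.tendsto' (by fun_prop) 0 s (add_zero s)) hU
  have hline : ∀ᶠ h in 𝓝 (0 : ℝ), γ s + h • v ∈ U :=
    Continuous.tendsto' (by fun_prop) 0 (γ s) (by simp) hU
  rw [hasDerivAt_iff_isLittleO_nhds_zero] at hγ hfγ
  have hclose : (fun h => f (γ s + h • v) - f (γ (s + h))) =O[𝓝 0]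
      fun h => γ (s + h) - γ s - h • v := by
    refine .of_bound K ?_
    filter_upwards [hcurve, hline] with h hc hl
    calc ‖f (γ s + h • v) - f (γ (s + h))‖ ≤ K * ‖γ s + h • v - γ (s + h)‖ :=
          hf.norm_sub_le hl hc
      _ = K * ‖γ (s + h) - γ s - h • v‖ := by rw [← norm_neg]; congr 2; abel
  rw [HasLineDerivAt, hasDerivAt_iff_isLittleO_nhds_zero]
  simp only [zero_add, zero_smul, add_zero]
  refine ((hclose.trans_isLittleO hγ).add hfγ).congr_left fun h => ?_
  abel

def limitingGradients (f : F → ℝ) (x : F) : Set (F →L[ℝ] ℝ) :=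
  {p | ∃ u : ℕ → F, (∀ n, DifferentiableAt ℝ f (u n)) ∧
    Tendsto u atTop (𝓝 x) ∧ Tendsto (fun n => fderiv ℝ f (u n)) atTop (𝓝 p)}

theorem neg_mem_limitingGradients {f : F → ℝ} {x : F} {p : F →L[ℝ] ℝ}
    (hp : p ∈ limitingGradients (-f) x) : -p ∈ limitingGradients f x := by
  obtain ⟨u, hdiff, hu, hlim⟩ := hp
  refine ⟨u, fun n => by simpa using (hdiff n).neg, hu, ?_⟩
  simpa [fderiv_neg] using hlim.neg

theorem LinearMap.exists_mem_segment_apply_eq {V : Type*} [AddCommGroup V] [Module ℝ V]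
    (ℓ : V →ₗ[ℝ] ℝ) {a b : V} {d : ℝ} (ha : ℓ a ≤ d) (hb : d ≤ ℓ b) :
    ∃ c ∈ segment ℝ a b, ℓ c = d := by
  have : d ∈ ℓ.toAffineMap '' segment ℝ a b := by
    rw [image_segment, ℓ.coe_toAffineMap, segment_eq_Icc (ha.trans hb)]
    exact ⟨ha, hb⟩
  simpa using this

theorem ae_ae_add_smul_notMem [MeasurableSpace F] [BorelSpace F] {μ : Measure F} [SFinite μ]
    [μ.IsAddRightInvariant] {T : Set F} (hT : μ T = 0) (v : F) : ∀ᵐ w ∂μ, ∀ᵐ t : ℝ, w + t • v ∉ T := by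
  have hmeas : MeasurableSet {q : F × ℝ | q.1 + q.2 • v ∉ toMeasurable μ T} :=
    ((measurableSet_toMeasurable μ T).preimage
      (by fun_prop : Continuous fun q : F × ℝ => q.1 + q.2 • v).measurable).compl
  have htranslate : ∀ᵐ t : ℝ, ∀ᵐ w ∂μ, w + t • v ∉ toMeasurable μ T := .of_forall fun t => by
    have := measure_preimage_add_right μ (t • v) (toMeasurable μ T)
    rw [measure_toMeasurable, hT] at this
    simp only [ae_iff, not_not]
    exact this
  filter_upwards [(Measure.ae_ae_comm hmeas).2 htranslate] with w hw
  filter_upwards [hw] with t ht htT using ht (subset_toMeasurable μ T htT)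

variable [FiniteDimensional ℝ F]

theorem LipschitzOnWith.apply_add_smul_sub_le_of_fderiv_apply_le {f : F → ℝ} {K : NNReal}
    {U : Set F} (hf : LipschitzOnWith K f U) (hU : IsOpen U) (hUc : Convex ℝ U) {v : F} {M : ℝ}
    (hM : ∀ y ∈ U, DifferentiableAt ℝ f y → fderiv ℝ f y v ≤ M) {x : F} {h : ℝ} (hh : 0 ≤ h)
    (hx : x ∈ U) (hxh : x + h • v ∈ U) :
    f (x + h • v) - f x ≤ M * h := by
  borelize F
  let μ : Measure F := Measure.addHaar
  have hrad : ∀ᵐ y ∂μ, y ∈ U → DifferentiableAt ℝ f y := by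
    filter_upwards [hf.ae_differentiableWithinAt_of_mem] with y hy hyU
    exact (hy hyU).differentiableAt (hU.mem_nhds hyU)
  have hnull : μ {y | y ∈ U ∧ ¬DifferentiableAt ℝ f y} = 0 := by
    simpa only [ae_iff, Classical.not_imp] using hrad
  have hgood : ∀ᵐ w ∂μ, ∀ᵐ t : ℝ, DifferentiableAt ℝ f (w + t • v) ∨ w + t • v ∉ U := by
    filter_upwards [ae_ae_add_smul_notMem hnull v] with w hw
    filter_upwards [hw] with t ht
    tauto
  have hnear : ∀ᶠ w in 𝓝 x, w ∈ U ∧ w + h • v ∈ U :=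
    (hU.eventually_mem hx).and
      ((continuous_add_const _).continuousAt.preimage_mem_nhds (hU.mem_nhds hxh))
  -- Base points with an a.e. good line are dense, and the bound passes to `x` by continuity.
  have hfreq : ∃ᶠ w in 𝓝 x, f (w + h • v) - f w ∈ Iic (M * h) := by
    refine (mem_closure_iff_frequently.1 ((Measure.dense_of_ae hgood).closure_eq ▸ mem_univ x)
      |>.and_eventually hnear).mono fun w ⟨hw, hwU, hwhU⟩ => ?_
    have hseg : ∀ t ∈ Icc 0 h, w + t • v ∈ U := fun t => hUc.add_smul_mem_of_mem_Icc hwU hwhU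
    refine hf.apply_add_smul_sub_le_of_ae_differentiableAt hM hh hseg ?_
    filter_upwards [hw] with t ht hmem
    exact ht.resolve_right (not_not.2 (hseg t (Ioo_subset_Icc_self hmem)))
  have hcont : ContinuousAt (fun w => f (w + h • v) - f w) x :=
    ((hf.continuousOn.continuousAt (hU.mem_nhds hxh)).comp (f := fun w => w + h • v)
      (continuous_add_const _).continuousAt).sub (hf.continuousOn.continuousAt (hU.mem_nhds hx))
  exact (hcont.tendsto.frequently hfreq).mem_of_closed isClosed_Iic

theorem LipschitzOnWith.exists_lt_fderiv_apply_of_hasLineDerivAt {f : F → ℝ} {K : NNReal}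
    {x v : F} {r d : ℝ} (hf : LipschitzOnWith K f (ball x r)) (hd : HasLineDerivAt ℝ f d x v)
    {ε : ℝ} (hε : 0 < ε) (hεr : ε ≤ r) :
    ∃ y ∈ ball x ε, DifferentiableAt ℝ f y ∧ d - ε < fderiv ℝ f y v := by
  by_contra! hle
  have hnear : ∀ᶠ h in 𝓝 (0 : ℝ), x + h • v ∈ ball x ε :=
    Continuous.tendsto' (by fun_prop) 0 x (by simp) (ball_mem_nhds x hε)
  have hslope : ∀ᶠ h in 𝓝[>] (0 : ℝ), h⁻¹ • (f (x + h • v) - f x) ≤ d - ε := by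
    filter_upwards [nhdsWithin_le_nhds hnear, self_mem_nhdsWithin] with h hxh (hpos : 0 < h)
    have := (hf.mono (ball_subset_ball hεr)).apply_add_smul_sub_le_of_fderiv_apply_le isOpen_ball
      (convex_ball x ε) hle hpos.le (mem_ball_self hε) hxh
    rw [smul_eq_mul, inv_mul_le_iff₀ hpos]
    linarith
  linarith [le_of_tendsto hd.tendsto_slope_zero_right hslope]

theorem LipschitzOnWith.exists_mem_limitingGradients_le_apply {f : F → ℝ} {K : NNReal}
    {U : Set F} {x v : F} {d : ℝ} (hf : LipschitzOnWith K f U) (hU : U ∈ 𝓝 x)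
    (hd : HasLineDerivAt ℝ f d x v) : ∃ p ∈ limitingGradients f x, d ≤ p v := by
  obtain ⟨r, hr, hball⟩ := Metric.mem_nhds_iff.1 hU
  obtain ⟨ε, -, hε, hε0⟩ := exists_seq_strictAnti_tendsto' hr
  choose y hy hdiff hlt using fun n =>
    (hf.mono hball).exists_lt_fderiv_apply_of_hasLineDerivAt hd (hε n).1 (hε n).2.le
  have hyx : Tendsto y atTop (𝓝 x) := tendsto_iff_dist_tendsto_zero.2 <|
    squeeze_zero (fun n => dist_nonneg) (fun n => (hy n).le) hε0
  have hbdd : ∀ n, fderiv ℝ f (y n) ∈ closedBall 0 K := fun n => by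
    simpa using norm_fderiv_le_of_lipschitzOn ℝ
      (isOpen_ball.mem_nhds (ball_subset_ball (hε n).2.le (hy n))) (hf.mono hball)
  obtain ⟨p, -, φ, hφ, hlim⟩ := tendsto_subseq_of_bounded isBounded_closedBall hbdd
  refine ⟨p, ⟨y ∘ φ, fun n => hdiff _, hyx.comp hφ.tendsto_atTop, hlim⟩, ?_⟩
  have happly : Tendsto (fun n => fderiv ℝ f (y (φ n)) v) atTop (𝓝 (p v)) :=
    ((ContinuousLinearMap.apply ℝ ℝ v).continuous.tendsto p).comp hlim
  have hlower : Tendsto (fun n => d - ε (φ n)) atTop (𝓝 d) := by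
    simpa using tendsto_const_nhds.sub (hε0.comp hφ.tendsto_atTop)
  exact le_of_tendsto_of_tendsto' hlower happly fun n => (hlt (φ n)).le

theorem LipschitzOnWith.exists_mem_limitingGradients_apply_le {f : F → ℝ} {K : NNReal}
    {U : Set F} {x v : F} {d : ℝ} (hf : LipschitzOnWith K f U) (hU : U ∈ 𝓝 x)
    (hd : HasLineDerivAt ℝ f d x v) : ∃ q ∈ limitingGradients f x, q v ≤ d := by
  obtain ⟨q, hq, hdq⟩ := hf.neg.exists_mem_limitingGradients_le_apply hU (HasDerivAt.neg hd)
  exact ⟨-q, neg_mem_limitingGradients hq, by simpa [neg_le] using hdq⟩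

end

theorem clarke_eq_convexHull_limitingGradients (f : E N → ℝ) (x : E N) :
    clarke f x = convexHull ℝ (limitingGradients f x) :=
  rfl

theorem clarke_chain_rule_general
    (f : E N → ℝ) (hf : LocallyLipschitz f)
    (η : ℝ → E N)
    (s : ℝ)
    (h1 : DifferentiableAt ℝ (fun t => f (η t)) s)
    (h2 : DifferentiableAt ℝ η s) :
    ∃ p ∈ clarke f (η s), deriv (fun t => f (η t)) s = p (deriv η s) := by
  obtain ⟨K, U, hU, hfU⟩ := hf (η s)
  have hline := hfU.hasLineDerivAt_of_hasDerivAt_comp hU h2.hasDerivAt h1.hasDerivAt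
  obtain ⟨p, hp, hdp⟩ := hfU.exists_mem_limitingGradients_le_apply hU hline
  obtain ⟨q, hq, hqd⟩ := hfU.exists_mem_limitingGradients_apply_le hU hline
  obtain ⟨r, hr, hrd⟩ :=
    (ContinuousLinearMap.apply ℝ ℝ (deriv η s)).toLinearMap.exists_mem_segment_apply_eq hqd hdp
  rw [clarke_eq_convexHull_limitingGradients]
  exact ⟨r, segment_subset_convexHull hq hp hr, hrd.symm⟩

/-- Clarke chain rule along an absolutely continuous curve η : (−∞,0] → ℝ^N
(with a.e. derivative g): if f ∘ η and η are differentiable at s, then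
(d/dt) f(η(t))|_{t=s} = p · η̇(s) for some p ∈ ∂f(η(s)). -/
theorem clarke_chain_rule
    (f : E N → ℝ) (hf : LocallyLipschitz f)
    (η g : ℝ → E N)
    (hgint : ∀ a ∈ Iic (0:ℝ), IntegrableOn g (Icc a 0))
    (hac : ∀ t ∈ Iic (0:ℝ), η 0 - η t = ∫ s in Ioc t 0, g s)
    (s : ℝ) (hs : s ∈ Iic (0:ℝ))
    (h1 : DifferentiableAt ℝ (fun t => f (η t)) s)
    (h2 : DifferentiableAt ℝ η s) :
    ∃ p ∈ clarke f (η s), deriv (fun t => f (η t)) s = p (deriv η s) :=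
  clarke_chain_rule_general f hf η s h1 h2
end
end

section
/- Let H : 𝕋^N × ℝ^N → ℝ be continuous and coercive in p (uniformly: H(x,p) → +∞ as |p| → ∞ uniformly in x), let a > 0 be a constant and f : 𝕋^N → ℝ continuous. If u is an upper semicontinuous viscosity subsolution and v a lower semicontinuous viscosity supersolution of a·w(x) + H(x, Dw) − f(x) = 0 on 𝕋^N, then u ≤ v on 𝕋^N. -/
open Set MeasureTheory Filter Topology

noncomputable section

variable {N : ℕ}

/-!
Doubling of variables. Maximize `u x - v (x - z) - K ‖z‖²` over `x ∈ ℝ^N`, `‖z‖ ≤ 1`; by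
periodicity the maximum is attained with `x` in a compact fundamental ball. At a maximizer
`(x, z)` the covector `p = 2K ⟪z, ·⟫` lies in `D⁺u(x)` and in `D⁻v(x - z)`, and subtracting the
two viscosity inequalities gives `a (u x - v (x - z)) ≤ f x - f (x - z) + H (x - z) p - H x p`.
The subsolution inequality bounds `H x p` from above independently of `K`, so coercivity gives
`2K ‖z‖ = ‖p‖ < R`; for `K` large, `‖z‖` is below the modulus of uniform continuity of `f` and
`H` on compacts, and the right-hand side is below any `ε`. Since `u x₀ - v x₀` is at most the
maximum, `a (u x₀ - v x₀) ≤ ε`.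
-/

def intVec (k : Fin N → ℤ) : E N := (EuclideanSpace.equiv (Fin N) ℝ).symm fun i => (k i : ℝ)

lemma exists_norm_add_intVec_le (x : E N) : ∃ k, ‖x + intVec k‖ ≤ √N := by
  refine ⟨fun i => -⌊x i⌋, ?_⟩
  have hfract : ∀ i, (x + intVec fun i => -⌊x i⌋) i = Int.fract (x i) := fun i => by
    simp [intVec, Int.fract, sub_eq_add_neg]
  rw [EuclideanSpace.norm_eq]
  refine Real.sqrt_le_sqrt ?_
  calc ∑ i, ‖(x + intVec fun i => -⌊x i⌋) i‖ ^ 2 ≤ ∑ _i : Fin N, (1 : ℝ) := by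
        refine Finset.sum_le_sum fun i _ => ?_
        rw [hfract, Real.norm_of_nonneg (Int.fract_nonneg _)]
        nlinarith [Int.fract_nonneg (x i), Int.fract_lt_one (x i)]
    _ = N := by simp

lemma ZPer.range_eq_image_closedBall {α : Type*} {g : E N → α} (hg : ZPer g) :
    range g = g '' Metric.closedBall 0 √N := by
  refine (image_subset_range _ _).antisymm' ?_
  rintro _ ⟨x, rfl⟩
  obtain ⟨k, hk⟩ := exists_norm_add_intVec_le x
  exact ⟨x + intVec k, by simpa using hk, hg x k⟩

lemma ZPer.bddAbove_range {u : E N → ℝ} (hper : ZPer u) (hu : UpperSemicontinuous u) :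
    BddAbove (range u) :=
  hper.range_eq_image_closedBall ▸
    (hu.upperSemicontinuousOn _).bddAbove_of_isCompact (isCompact_closedBall _ _)

lemma ZPer.bddBelow_range {v : E N → ℝ} (hper : ZPer v) (hv : LowerSemicontinuous v) :
    BddBelow (range v) :=
  hper.range_eq_image_closedBall ▸
    (hv.lowerSemicontinuousOn _).bddBelow_of_isCompact (isCompact_closedBall _ _)

lemma IsCompact.exists_pos_forall_lt {X F : Type*} [TopologicalSpace X]
    [SeminormedAddCommGroup F] {s : Set X} (hs : IsCompact s) {G : F → X → ℝ}
    (hG : Continuous fun q : F × X => G q.1 q.2) {ε : ℝ} (hG0 : ∀ x ∈ s, G 0 x < ε) :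
    ∃ δ > 0, ∀ z, ‖z‖ < δ → ∀ x ∈ s, G z x < ε := by
  have : ∀ᶠ z in 𝓝 (0 : F), ∀ x ∈ s, G z x < ε :=
    hs.eventually_forall_of_forall_eventually fun x hx =>
      hG.continuousAt.eventually (gt_mem_nhds (hG0 x hx))
  simpa using Metric.eventually_nhds_iff.1 this

lemma mem_Dplus_of_eventually_le {u : E N → ℝ} {x y : E N} {K : ℝ}
    (h : ∀ᶠ x' in 𝓝 x, u x' ≤ u x + K * (‖x' - y‖ ^ 2 - ‖x - y‖ ^ 2)) :
    (2 * K) • innerSL ℝ (x - y) ∈ Dplus u x := by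
  refine ⟨fun x' => u x + K * (‖x' - y‖ ^ 2 - ‖x - y‖ ^ 2),
    contDiff_const.add (contDiff_const.mul
      (((contDiff_norm_sq ℝ).comp (contDiff_id.sub contDiff_const)).sub contDiff_const)),
    by simp, h, ?_⟩
  have hφ := ((((hasFDerivAt_id x).sub_const y).norm_sq.sub_const (‖x - y‖ ^ 2)).const_mul
    K).const_add (u x)
  refine hφ.fderiv.trans ?_
  ext w
  simp only [id_eq, map_sub, ContinuousLinearMap.comp_id, smul_apply, sub_apply, coe_innerSL_apply,
    nsmul_eq_mul, Nat.cast_ofNat, smul_eq_mul]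
  ring

lemma mem_Dminus_of_eventually_le {v : E N → ℝ} {x y : E N} {K : ℝ}
    (h : ∀ᶠ y' in 𝓝 y, v y - K * (‖x - y'‖ ^ 2 - ‖x - y‖ ^ 2) ≤ v y') :
    (2 * K) • innerSL ℝ (x - y) ∈ Dminus v y := by
  refine ⟨fun y' => v y - K * (‖x - y'‖ ^ 2 - ‖x - y‖ ^ 2),
    contDiff_const.sub (contDiff_const.mul
      (((contDiff_norm_sq ℝ).comp (contDiff_const.sub contDiff_id)).sub contDiff_const)),
    by simp, h, ?_⟩
  have hφ := ((((hasFDerivAt_id y).const_sub x).norm_sq.sub_const (‖x - y‖ ^ 2)).const_mul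
    K).const_sub (v y)
  refine hφ.fderiv.trans ?_
  ext w
  simp only [id_eq, map_sub, ContinuousLinearMap.comp_neg, ContinuousLinearMap.comp_id, neg_sub,
    neg_apply, smul_apply, sub_apply, coe_innerSL_apply, nsmul_eq_mul, Nat.cast_ofNat, smul_eq_mul]
  ring

/-- The doubled-variables penalization `u x - v y - K ‖x - y‖²`, written in `x` and `z = x - y`. -/
def doubling (u v : E N → ℝ) (K : ℝ) (x z : E N) : ℝ := u x - v (x - z) - K * ‖z‖ ^ 2

section doubling

variable {u v : E N → ℝ} {K : ℝ} {x z : E N}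

lemma exists_isMax_doubling (hu : UpperSemicontinuous u) (huper : ZPer u)
    (hv : LowerSemicontinuous v) (hvper : ZPer v) (K : ℝ) :
    ∃ x z, x ∈ Metric.closedBall 0 √N ∧
      ∀ x' z', ‖z'‖ ≤ 1 → doubling u v K x' z' ≤ doubling u v K x z := by
  have hper : ∀ z, ZPer fun x => doubling u v K x z := fun z x k => by
    simp only [doubling, add_sub_right_comm x _ z]
    rw [huper x k, hvper (x - z) k]
  have husc : UpperSemicontinuous fun q : E N × E N => doubling u v K q.1 q.2 := by
    simp only [doubling, sub_eq_add_neg _ (K * _), sub_eq_add_neg (u _), add_assoc]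
    exact ((hu.comp continuous_fst).add ((continuous_neg.comp_lowerSemicontinuous_antitone
      (hv.comp (continuous_fst.sub continuous_snd)) fun _ _ h => neg_le_neg h).add
        (by fun_prop : Continuous fun q : E N × E N => -(K * ‖q.2‖ ^ 2)).upperSemicontinuous))
  obtain ⟨⟨x, z⟩, ⟨hx, -⟩, hmax⟩ := (husc.upperSemicontinuousOn _).exists_isMaxOn
    ⟨(0, 0), by simp⟩ ((isCompact_closedBall (0 : E N) √N).prod (isCompact_closedBall 0 1))
  refine ⟨x, z, hx, fun x' z' hz' => ?_⟩
  obtain ⟨y, hy, hyx⟩ : doubling u v K x' z' ∈ (fun x => doubling u v K x z') '' _ :=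
    (hper z').range_eq_image_closedBall ▸ mem_range_self x'
  exact hyx ▸ hmax (a := (y, z')) ⟨hy, by simpa using hz'⟩

lemma sub_le_of_isMax_doubling (hK : 0 ≤ K)
    (hmax : ∀ x' z', ‖z'‖ ≤ 1 → doubling u v K x' z' ≤ doubling u v K x z) (x₀ : E N) :
    u x₀ - v x₀ ≤ u x - v (x - z) := by
  have := hmax x₀ 0 (by simp)
  simp only [doubling, sub_zero, norm_zero] at this
  nlinarith [norm_nonneg z]

lemma norm_lt_one_of_isMax_doubling {Mu mv : ℝ} (hMu : ∀ y, u y ≤ Mu) (hmv : ∀ y, mv ≤ v y)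
    {x₀ : E N} (hK : Mu - mv - (u x₀ - v x₀) < K)
    (hmax : ∀ x' z', ‖z'‖ ≤ 1 → doubling u v K x' z' ≤ doubling u v K x z) :
    ‖z‖ < 1 := by
  have := hmax x₀ 0 (by simp)
  simp only [doubling, sub_zero, norm_zero] at this
  have hK0 : 0 < K := by linarith [hMu x₀, hmv x₀]
  refine (sq_lt_one_iff₀ (norm_nonneg z)).1 ((mul_lt_iff_lt_one_right hK0).1 ?_)
  nlinarith [hMu x, hmv (x - z)]

lemma mem_Dplus_of_isMax_doubling (hz : ‖z‖ < 1)
    (hmax : ∀ x' z', ‖z'‖ ≤ 1 → doubling u v K x' z' ≤ doubling u v K x z) :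
    (2 * K) • innerSL ℝ z ∈ Dplus u x := by
  have hball : Metric.ball (x - z) 1 ∈ 𝓝 x :=
    Metric.isOpen_ball.mem_nhds (by simpa [dist_eq_norm] using hz)
  have := mem_Dplus_of_eventually_le (u := u) (y := x - z) (K := K) <| by
    filter_upwards [hball] with x' hx'
    have := hmax x' (x' - (x - z)) (mem_ball_iff_norm.1 hx').le
    simp only [doubling, sub_sub_cancel] at this
    simp only [sub_sub_cancel]
    linarith
  rwa [sub_sub_cancel] at this

lemma mem_Dminus_of_isMax_doubling (hz : ‖z‖ < 1)
    (hmax : ∀ x' z', ‖z'‖ ≤ 1 → doubling u v K x' z' ≤ doubling u v K x z) :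
    (2 * K) • innerSL ℝ z ∈ Dminus v (x - z) := by
  have hball : Metric.ball x 1 ∈ 𝓝 (x - z) :=
    Metric.isOpen_ball.mem_nhds (by simpa [dist_eq_norm] using hz)
  have := mem_Dminus_of_eventually_le (v := v) (x := x) (y := x - z) (K := K) <| by
    filter_upwards [hball] with y' hy'
    have := hmax x (x - y') (mem_ball_iff_norm'.1 hy').le
    simp only [doubling, sub_sub_cancel] at this
    simp only [sub_sub_cancel]
    linarith
  rwa [sub_sub_cancel] at this

end doubling

theorem discounted_comparison_general
    (H : E N → Dual N → ℝ)
    (hHc : Continuous fun q : E N × Dual N => H q.1 q.2)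
    (hcoer : ∀ C : ℝ, ∃ R : ℝ, ∀ x p, R ≤ ‖p‖ → C ≤ H x p)
    (a : ℝ) (ha : 0 < a)
    (f : E N → ℝ) (hf : Continuous f)
    (u v : E N → ℝ)
    (hu : UpperSemicontinuous u) (huper : ZPer u)
    (hv : LowerSemicontinuous v) (hvper : ZPer v)
    (hsub : ∀ x, ∀ p ∈ Dplus u x, a * u x + H x p - f x ≤ 0)
    (hsup : ∀ x, ∀ p ∈ Dminus v x, 0 ≤ a * v x + H x p - f x) :
    ∀ x, u x ≤ v x := by
  intro x₀
  obtain ⟨Mu, hMu⟩ := huper.bddAbove_range hu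
  obtain ⟨mv, hmv⟩ := hvper.bddBelow_range hv
  obtain ⟨Mf, hMf⟩ := (isCompact_closedBall (0 : E N) √N).bddAbove_image hf.continuousOn
  set θ := u x₀ - v x₀
  obtain ⟨R, hR⟩ := hcoer (Mf - a * (θ + mv) + 1)
  suffices h : a * θ ≤ 0 from sub_nonpos.1 (nonpos_of_mul_nonpos_right h ha)
  refine le_of_forall_pos_lt_add fun ε hε => ?_
  obtain ⟨δ, hδ, hmod⟩ := ((isCompact_closedBall (0 : E N) √N).prod
    (isCompact_closedBall (0 : Dual N) R)).exists_pos_forall_lt (ε := ε)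
    (G := fun z q => f q.1 - f (q.1 - z) + H (q.1 - z) q.2 - H q.1 q.2) (by fun_prop)
    (fun _ _ => by simpa using hε)
  -- The first bound forces `‖z‖ < 1`; the second turns `2K ‖z‖ = ‖p‖ < R` into `‖z‖ < δ`.
  set K := max (Mu - mv - θ + 1) (R / (2 * δ))
  have hK : Mu - mv - θ < K := lt_of_lt_of_le (lt_add_one _) (le_max_left _ _)
  have hKδ : R ≤ 2 * δ * K := (div_le_iff₀' (by positivity)).1 (le_max_right _ _)
  obtain ⟨x, z, hx, hmax⟩ := exists_isMax_doubling hu huper hv hvper K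
  have hz : ‖z‖ < 1 := norm_lt_one_of_isMax_doubling (hMu <| mem_range_self ·)
    (hmv <| mem_range_self ·) hK hmax
  have hK0 : 0 ≤ K := by linarith [hMu (mem_range_self x₀), hmv (mem_range_self x₀)]
  have hθ : θ ≤ u x - v (x - z) := sub_le_of_isMax_doubling hK0 hmax x₀
  set p := (2 * K) • innerSL ℝ z
  have hsubx := hsub x p (mem_Dplus_of_isMax_doubling hz hmax)
  have hsupxz := hsup (x - z) p (mem_Dminus_of_isMax_doubling hz hmax)
  have hpR : ‖p‖ < R := by
    by_contra! hRp
    have := hR x p hRp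
    have := hMf (mem_image_of_mem f hx)
    have : a * (θ + mv) ≤ a * u x := by gcongr; linarith [hmv (mem_range_self (x - z))]
    linarith
  have hzδ : ‖z‖ < δ := by
    rw [norm_smul, innerSL_apply_norm, Real.norm_of_nonneg (by linarith)] at hpR
    nlinarith
  have := hmod z hzδ (x, p) ⟨hx, by simpa using hpR.le⟩
  have : a * θ ≤ a * (u x - v (x - z)) := by gcongr
  linarith

/-- comparison principle for the discounted equation
a·w + H(x,Dw) − f(x) = 0 on the torus: an USC subsolution lies below a LSC supersolution. -/
theorem discounted_comparison
    (H : E N → Dual N → ℝ)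
    (hHc : Continuous fun q : E N × Dual N => H q.1 q.2)
    (hHper : ∀ p, ZPer fun x => H x p)
    (hcoer : ∀ C : ℝ, ∃ R : ℝ, ∀ x p, R ≤ ‖p‖ → C ≤ H x p)
    (a : ℝ) (ha : 0 < a)
    (f : E N → ℝ) (hf : Continuous f) (hfper : ZPer f)
    (u v : E N → ℝ)
    (hu : UpperSemicontinuous u) (huper : ZPer u)
    (hv : LowerSemicontinuous v) (hvper : ZPer v)
    (hsub : ∀ x, ∀ p ∈ Dplus u x, a * u x + H x p - f x ≤ 0)
    (hsup : ∀ x, ∀ p ∈ Dminus v x, 0 ≤ a * v x + H x p - f x) :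
    ∀ x, u x ≤ v x :=
  discounted_comparison_general H hHc hcoer a ha f hf u v hu huper hv hvper hsub hsup
end
end

section
/- Call x ∈ 𝕋^N an equilibrium point of the critical weakly coupled system if o · (min_p H₁(x,p), …, min_p H_m(x,p)) = β. If x is an equilibrium and u is a critical subsolution, then for every index i and every q ∈ ∂u_i(x) (Clarke gradient), one has H_i(x,q) = min_p H_i(x,p) and H_i(x,q) + ∑_j a_{ij} u_j(x) = β. -/
open Set MeasureTheory Filter Topology

noncomputable section

variable {N : ℕ}

variable {m : ℕ}

/-- A (critical at α = β) subsolution of the weakly coupled system: each component is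
Lipschitz, periodic, and H_i(x,p) + ∑_j a_{ij} u_j(x) ≤ α for every Clarke gradient
p ∈ ∂u_i(x) (equivalent to the viscosity notion by convexity). -/
def IsSubsol (H : Fin m → E N → Dual N → ℝ) (A : Matrix (Fin m) (Fin m) ℝ) (α : ℝ)
    (u : Fin m → E N → ℝ) : Prop :=
  (∀ i, ∃ K : NNReal, LipschitzWith K (u i)) ∧ (∀ i, ZPer (u i)) ∧
  ∀ i x, ∀ p ∈ clarke (u i) x, H i x p + ∑ j, A i j * u j x ≤ α

/-!
Put `m_i = inf_p H_i(x,p)` and `S_i = ∑_j a_{ij} u_j(x)`. Since the Clarke gradient of the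
Lipschitz function `u_i` at `x` is nonempty, the subsolution inequality gives `m_i + S_i ≤ β`.
Averaging with the weights `o` kills the coupling terms (`oA = 0`) and, at an equilibrium,
leaves `∑ o_i (m_i + S_i) = β`. Irreducibility makes every `o_i` positive, so `m_i + S_i = β`
for each `i`, and then `H_i(x,q) + S_i ≤ β = m_i + S_i ≤ H_i(x,q) + S_i` for `q ∈ ∂u_i(x)`.
-/

lemma LipschitzWith.clarke_nonempty {f : E N → ℝ} {K : NNReal} (hf : LipschitzWith K f)
    (x : E N) : (clarke f x).Nonempty := by
  have hdense : Dense {y : E N | DifferentiableAt ℝ f y} :=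
    MeasureTheory.Measure.dense_of_ae (hf.ae_differentiableAt (μ := MeasureTheory.volume))
  have happrox : ∀ n : ℕ, ∃ y, DifferentiableAt ℝ f y ∧ dist x y < 1 / (n + 1) := fun n =>
    hdense.exists_dist_lt x Nat.one_div_pos_of_nat
  choose v hv_diff hv_dist using happrox
  have hv_tendsto : Tendsto v atTop (𝓝 x) := by
    rw [tendsto_iff_dist_tendsto_zero]
    refine squeeze_zero (fun _ => dist_nonneg) (fun n => ?_) tendsto_one_div_add_atTop_nhds_zero_nat
    rw [dist_comm]
    exact (hv_dist n).le
  have hbounded : ∀ n, fderiv ℝ f (v n) ∈ Metric.closedBall (0 : Dual N) K := fun n => by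
    simpa only [Metric.mem_closedBall, dist_zero_right] using norm_fderiv_le_of_lipschitz ℝ hf
  obtain ⟨p, -, φ, hφ, hφ_tendsto⟩ := tendsto_subseq_of_bounded Metric.isBounded_closedBall hbounded
  exact ⟨p, subset_convexHull _ _
    ⟨v ∘ φ, fun n => hv_diff _, hv_tendsto.comp hφ.tendsto_atTop, hφ_tendsto⟩⟩

lemma Continuous.bddBelow_range_of_nonneg_off_ball {F : Type*} [NormedAddCommGroup F]
    [ProperSpace F] {g : F → ℝ} (hg : Continuous g) {R : ℝ} (hR : ∀ p, R ≤ ‖p‖ → 0 ≤ g p) :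
    BddBelow (range g) := by
  obtain ⟨p₀, -, hp₀⟩ := (isCompact_closedBall (0 : F) (max R 0)).exists_isMinOn
    ⟨0, Metric.mem_closedBall_self (le_max_right _ _)⟩ hg.continuousOn
  refine ⟨min (g p₀) 0, ?_⟩
  rintro _ ⟨p, rfl⟩
  rcases le_or_gt ‖p‖ (max R 0) with hp | hp
  · exact (min_le_left _ _).trans (hp₀ (mem_closedBall_zero_iff.mpr hp))
  · exact (min_le_right _ _).trans (hR p ((le_max_left _ _).trans hp.le))

lemma Matrix.pos_of_nonneg_of_vecMul_eq_zero {ι : Type*} [Fintype ι] [DecidableEq ι]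
    {A : Matrix ι ι ℝ} (hoff : ∀ i j, i ≠ j → A i j ≤ 0)
    (hirr : ∀ W : Finset ι, W.Nonempty → W ≠ Finset.univ → ∃ i ∈ W, ∃ j ∉ W, A i j < 0)
    {o : ι → ℝ} (hnonneg : ∀ i, 0 ≤ o i) (hne : o ≠ 0) (ho : vecMul o A = 0) (i : ι) :
    0 < o i := by
  by_contra! hi
  set W := Finset.univ.filter fun k => o k ≠ 0
  have hW_nonempty : W.Nonempty := by
    obtain ⟨k, hk⟩ := Function.ne_iff.mp hne
    exact ⟨k, Finset.mem_filter.mpr ⟨Finset.mem_univ k, hk⟩⟩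
  have hW_ne_univ : W ≠ Finset.univ := fun h => by
    have : i ∈ W := h ▸ Finset.mem_univ i
    exact (Finset.mem_filter.mp this).2 (le_antisymm hi (hnonneg i))
  obtain ⟨a, haW, b, hbW, hab⟩ := hirr W hW_nonempty hW_ne_univ
  have hoa : 0 < o a := (hnonneg a).lt_of_ne (Finset.mem_filter.mp haW).2.symm
  have hob : o b = 0 := by simpa [W] using hbW
  have hterm_nonpos : ∀ k ∈ Finset.univ, o k * A k b ≤ 0 := fun k _ => by
    rcases eq_or_ne k b with rfl | hk
    · simp [hob]
    · exact mul_nonpos_of_nonneg_of_nonpos (hnonneg k) (hoff k b hk)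
  have hcol : ∑ k, o k * A k b < 0 :=
    Finset.sum_neg' hterm_nonpos ⟨a, Finset.mem_univ a, mul_neg_of_pos_of_neg hoa hab⟩
  have : ∑ k, o k * A k b = 0 := by simpa [vecMul, dotProduct] using congr_fun ho b
  linarith

lemma eq_of_forall_le_of_sum_mul_eq {ι : Type*} [Fintype ι] {w c : ι → ℝ} {b : ℝ}
    (hw : ∀ i, 0 < w i) (hle : ∀ i, c i ≤ b) (hsum : ∑ i, w i * c i = ∑ i, w i * b) (i : ι) :
    c i = b := by
  have hmul := (Finset.sum_eq_sum_iff_of_le fun k _ =>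
    mul_le_mul_of_nonneg_left (hle k) (hw k).le).mp hsum i (Finset.mem_univ i)
  exact mul_left_cancel₀ (hw i).ne' hmul

theorem equilibrium_point_properties_general
    (H : Fin m → E N → Dual N → ℝ)
    (hHc : ∀ i, Continuous fun q : E N × Dual N => H i q.1 q.2)
    (hsl : ∀ i x (C : ℝ), ∃ R : ℝ, ∀ p : Dual N, R ≤ ‖p‖ → C * ‖p‖ ≤ H i x p)
    (A : Matrix (Fin m) (Fin m) ℝ)
    (hoff : ∀ i j, i ≠ j → A i j ≤ 0)
    (hirr : ∀ W : Finset (Fin m), W.Nonempty → W ≠ Finset.univ →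
      ∃ i ∈ W, ∃ j ∉ W, A i j < 0)
    (β : ℝ)
    (o : Fin m → ℝ) (ho : Matrix.vecMul o A = 0) (ho1 : ∑ i, o i = 1)
    (honn : ∀ i, 0 ≤ o i)
    (u : Fin m → E N → ℝ) (hu : IsSubsol H A β u)
    (x : E N)
    (hx : ∑ i, o i * sInf (Set.range fun p : Dual N => H i x p) = β) :
    ∀ i, ∀ q ∈ clarke (u i) x,
      H i x q = sInf (Set.range fun p : Dual N => H i x p) ∧
      H i x q + ∑ j, A i j * u j x = β := by
  obtain ⟨hlip, -, hsub⟩ := hu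
  have hinf_le : ∀ k (q : Dual N), sInf (range fun p => H k x p) ≤ H k x q := fun k q => by
    obtain ⟨R, hR⟩ := hsl k x 0
    have hbdd := ((hHc k).comp (Continuous.prodMk_right x)).bddBelow_range_of_nonneg_off_ball
      (R := R) fun p hp => by simpa using hR p hp
    exact csInf_le hbdd ⟨q, rfl⟩
  have hle : ∀ k, sInf (range fun p => H k x p) + ∑ j, A k j * u j x ≤ β := fun k => by
    obtain ⟨K, hK⟩ := hlip k
    obtain ⟨q, hq⟩ := hK.clarke_nonempty x
    linarith [hsub k x q hq, hinf_le k q]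
  have hpos := Matrix.pos_of_nonneg_of_vecMul_eq_zero hoff hirr honn
    (by rintro rfl; simp at ho1) ho
  have hcoupling : ∑ k, o k * ∑ j, A k j * u j x = 0 := by
    have hdot := Matrix.dotProduct_mulVec o A fun j => u j x
    rw [ho, zero_dotProduct] at hdot
    simpa only [Matrix.mulVec, dotProduct] using hdot
  have heq := eq_of_forall_le_of_sum_mul_eq hpos hle (by
    simp only [mul_add, Finset.sum_add_distrib, ← Finset.sum_mul, hx, hcoupling, ho1]; ring)
  intro i q hq
  constructor <;> linarith [hsub i x q hq, hinf_le i q, heq i]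

/-- at an equilibrium point x (where o · min_p H(x,p) = β), every Clarke
gradient q ∈ ∂u_i(x) of a critical subsolution u realizes the minimum of H_i(x,·) and
the equation holds with equality. -/
theorem equilibrium_point_properties
    (H : Fin m → E N → Dual N → ℝ)
    (hHc : ∀ i, Continuous fun q : E N × Dual N => H i q.1 q.2)
    (hHper : ∀ i p, ZPer fun x => H i x p)
    (hconv : ∀ i x, ConvexOn ℝ Set.univ (fun p : Dual N => H i x p))
    (hsl : ∀ i x (C : ℝ), ∃ R : ℝ, ∀ p : Dual N, R ≤ ‖p‖ → C * ‖p‖ ≤ H i x p)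
    (A : Matrix (Fin m) (Fin m) ℝ)
    (hoff : ∀ i j, i ≠ j → A i j ≤ 0)
    (hrow : ∀ i, ∑ j, A i j = 0)
    (hirr : ∀ W : Finset (Fin m), W.Nonempty → W ≠ Finset.univ →
      ∃ i ∈ W, ∃ j ∉ W, A i j < 0)
    (β : ℝ) (hβ : β = sInf {α | ∃ u, IsSubsol H A α u})
    (o : Fin m → ℝ) (ho : Matrix.vecMul o A = 0) (ho1 : ∑ i, o i = 1)
    (honn : ∀ i, 0 ≤ o i)
    (u : Fin m → E N → ℝ) (hu : IsSubsol H A β u)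
    (x : E N)
    (hx : ∑ i, o i * sInf (Set.range fun p : Dual N => H i x p) = β) :
    ∀ i, ∀ q ∈ clarke (u i) x,
      H i x q = sInf (Set.range fun p : Dual N => H i x p) ∧
      H i x q + ∑ j, A i j * u j x = β :=
  equilibrium_point_properties_general H hHc hsl A hoff hirr β o ho ho1 honn u hu x hx
end
end
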